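/- For all integers m ≥ 2 and n ≥ 1, the group D_{2^m(2n+1)}, i.e. the presented group ⟨x, y ∣ x^{2^m} = 1, y^{2n+1} = 1, xyx⁻¹ = y⁻¹⟩ (the quotient of the free group on two generators x, y by the normal closure of the relators x^{2^m}, y^{2n+1}, xyx⁻¹y), has Grossman's Property A. -/

import Mathlib

/-- A group `G` has Grossman's Property A if every class-preserving automorphism
(i.e. one sending each element to a conjugate of itself) is inner. -/
def HasPropertyA (G : Type*) [Group G] : Prop :=
  ∀ φ : G ≃* G, (∀ g : G, IsConj g (φ g)) → ∃ h : G, ∀ g : G, φ g = h * g * h⁻¹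

/-- The relators of the group
`D_{2^m(2n+1)} = ⟨x, y ∣ x^{2^m} = 1, y^{2n+1} = 1, xyx⁻¹ = y⁻¹⟩`,
where `x`, `y` are the generators `0`, `1`. -/
def DRels (m n : ℕ) : Set (FreeGroup (Fin 2)) :=
  let x : FreeGroup (Fin 2) := FreeGroup.of 0
  let y : FreeGroup (Fin 2) := FreeGroup.of 1
  {x ^ (2 ^ m), y ^ (2 * n + 1), x * y * x⁻¹ * y}

/-! Write `x`, `y` for the generators, so that conjugation by `x` inverts `y`. Inside the group
generated by `x` and `y`, every conjugate of `y` is `y` or `y⁻¹` and every conjugate of `x` is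
`x * y ^ k`. Since `y` has odd order, `x * y ^ k = y ^ t * x * y ^ (-t)` for a suitable `t`, so a
class-preserving automorphism agrees on both generators with conjugation by `y ^ t` (if it fixes
`y`) or by `y ^ t * x` (if it inverts `y`). -/

section InvertingPair

variable {G : Type*} [Group G] {x y : G}

theorem zpow_mul_eq_mul_zpow_neg_of_conj_eq_inv (hxy : x * y * x⁻¹ = y⁻¹) (b : ℤ) :
    y ^ b * x = x * y ^ (-b) := by
  have hconj : x * y ^ (-b) * x⁻¹ = y ^ b := by rw [← conj_zpow, hxy, inv_zpow', neg_neg]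
  rw [← hconj]
  group

theorem exists_units_conj_eq_zpow_of_mem_closure (hxy : x * y * x⁻¹ = y⁻¹) {g : G}
    (hg : g ∈ Subgroup.closure {x, y}) : ∃ u : ℤˣ, g * y * g⁻¹ = y ^ (u : ℤ) := by
  induction hg using Subgroup.closure_induction with
  | mem g hg =>
    rcases hg with hg | hg <;> subst g
    · exact ⟨-1, by simpa using hxy⟩
    · exact ⟨1, by simp⟩
  | one => exact ⟨1, by simp⟩
  | mul g h _ _ ihg ihh =>
    obtain ⟨u, hu⟩ := ihg
    obtain ⟨v, hv⟩ := ihh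
    refine ⟨u * v, ?_⟩
    calc g * h * y * (g * h)⁻¹ = g * (h * y * h⁻¹) * g⁻¹ := by group
      _ = y ^ ((u * v : ℤˣ) : ℤ) := by rw [hv, ← conj_zpow, hu, ← zpow_mul, Units.val_mul]
  | inv g _ ih =>
    obtain ⟨u, hu⟩ := ih
    refine ⟨u, ?_⟩
    have hy : g⁻¹ * y ^ (u : ℤ) * g⁻¹⁻¹ = y := by rw [← hu]; group
    calc g⁻¹ * y * g⁻¹⁻¹ = (g⁻¹ * y * g⁻¹⁻¹) ^ ((u * u : ℤˣ) : ℤ) := by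
          rw [Int.units_mul_self, Units.val_one, zpow_one]
      _ = y ^ (u : ℤ) := by rw [Units.val_mul, zpow_mul, conj_zpow, hy]

theorem exists_conj_eq_mul_zpow_of_mem_closure (hxy : x * y * x⁻¹ = y⁻¹) {g : G}
    (hg : g ∈ Subgroup.closure {x, y}) : ∃ k : ℤ, g * x * g⁻¹ = x * y ^ k := by
  induction hg using Subgroup.closure_induction with
  | mem g hg =>
    rcases hg with hg | hg <;> subst g
    · exact ⟨0, by group⟩
    · refine ⟨-2, ?_⟩
      calc y * x * y⁻¹ = y ^ (1 : ℤ) * x * y⁻¹ := by group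
        _ = x * y ^ (-2 : ℤ) := by rw [zpow_mul_eq_mul_zpow_neg_of_conj_eq_inv hxy]; group
  | one => exact ⟨0, by group⟩
  | mul g h hg _ ihg ihh =>
    obtain ⟨j, hj⟩ := ihg
    obtain ⟨k, hk⟩ := ihh
    obtain ⟨u, hu⟩ := exists_units_conj_eq_zpow_of_mem_closure hxy hg
    refine ⟨j + u * k, ?_⟩
    calc g * h * x * (g * h)⁻¹ = g * (h * x * h⁻¹) * g⁻¹ := by group
      _ = (g * x * g⁻¹) * (g * y * g⁻¹) ^ k := by rw [hk, conj_zpow]; group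
      _ = x * y ^ (j + u * k) := by rw [hj, hu, ← zpow_mul, zpow_add]; group
  | inv g hg ih =>
    obtain ⟨k, hk⟩ := ih
    obtain ⟨u, hu⟩ := exists_units_conj_eq_zpow_of_mem_closure hxy (inv_mem hg)
    refine ⟨-(u * k), ?_⟩
    have hx : x = g⁻¹ * (x * y ^ k) * g := by rw [← hk]; group
    calc g⁻¹ * x * g⁻¹⁻¹ = x * (g⁻¹ * y * g⁻¹⁻¹) ^ (-k) := by
          rw [conj_zpow]; conv_rhs => rw [hx]
          group
      _ = x * y ^ (-(u * k)) := by rw [hu, ← zpow_mul]; ring_nf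

theorem exists_zpow_conj_eq_mul_zpow_of_conj_eq_inv (hxy : x * y * x⁻¹ = y⁻¹) {n : ℕ}
    (hy : y ^ (2 * n + 1) = 1) (k : ℤ) : ∃ t : ℤ, y ^ t * x * (y ^ t)⁻¹ = x * y ^ k := by
  -- `-2` is invertible modulo `2 * n + 1`, with inverse `-(n + 1)`.
  refine ⟨-(k * (n + 1)), ?_⟩
  have hyk : y ^ (k * (2 * n + 1 : ℤ)) = 1 := by
    rw [mul_comm, zpow_mul, show (2 * n + 1 : ℤ) = (2 * n + 1 : ℕ) by push_cast; rfl, zpow_natCast,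
      hy, one_zpow]
  calc y ^ (-(k * (n + 1))) * x * (y ^ (-(k * (n + 1))))⁻¹
      = x * y ^ (k * (2 * n + 1 : ℤ)) * y ^ k := by
        rw [zpow_mul_eq_mul_zpow_neg_of_conj_eq_inv hxy, ← zpow_neg, mul_assoc, ← zpow_add,
          mul_assoc, ← zpow_add]
        ring_nf
    _ = x * y ^ k := by rw [hyk, mul_one]

theorem eq_conj_of_closure_pair_eq_top (hgen : Subgroup.closure {x, y} = ⊤) {φ : G →* G} {h : G}
    (hx : φ x = h * x * h⁻¹) (hy : φ y = h * y * h⁻¹) (g : G) : φ g = h * g * h⁻¹ :=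
  DFunLike.congr_fun (MonoidHom.eq_of_eqOn_dense hgen (g := (MulAut.conj h).toMonoidHom)
    (Set.forall_insert_of_forall (Set.eqOn_singleton.mpr hy) hx)) g

theorem hasPropertyA_of_conj_eq_inv (hgen : Subgroup.closure {x, y} = ⊤)
    (hxy : x * y * x⁻¹ = y⁻¹) {n : ℕ} (hy : y ^ (2 * n + 1) = 1) : HasPropertyA G := by
  intro φ hφ
  have hmem (g : G) : g ∈ Subgroup.closure {x, y} := hgen ▸ Subgroup.mem_top g
  obtain ⟨a, ha⟩ := isConj_iff.mp (hφ x)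
  obtain ⟨k, hk⟩ := exists_conj_eq_mul_zpow_of_mem_closure hxy (hmem a)
  obtain ⟨t, ht⟩ := exists_zpow_conj_eq_mul_zpow_of_conj_eq_inv hxy hy k
  obtain ⟨b, hb⟩ := isConj_iff.mp (hφ y)
  obtain ⟨u, hu⟩ := exists_units_conj_eq_zpow_of_mem_closure hxy (hmem b)
  have hφx : φ x = y ^ t * x * (y ^ t)⁻¹ := by rw [← ha, hk, ht]
  have hφy : φ y = y ^ (u : ℤ) := by rw [← hb, hu]
  rcases Int.units_eq_one_or u with rfl | rfl
  · refine ⟨y ^ t, eq_conj_of_closure_pair_eq_top hgen (φ := φ.toMonoidHom) hφx ?_⟩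
    simp only [MulEquiv.coe_toMonoidHom, hφy, Units.val_one, zpow_one]
    group
  · refine ⟨y ^ t * x, eq_conj_of_closure_pair_eq_top hgen (φ := φ.toMonoidHom) ?_ ?_⟩
    · simp only [MulEquiv.coe_toMonoidHom, hφx]; group
    · calc φ y = y⁻¹ := by simp [hφy]
        _ = y ^ t * (x * y * x⁻¹) * (y ^ t)⁻¹ := by rw [hxy]; group
        _ = y ^ t * x * y * (y ^ t * x)⁻¹ := by group

end InvertingPair

namespace DRels

variable (m n : ℕ)

theorem closure_of_pair_eq_top :
    Subgroup.closure {PresentedGroup.of 0, PresentedGroup.of 1} =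
      (⊤ : Subgroup (PresentedGroup (DRels m n))) := by
  rw [← PresentedGroup.closure_range_of, Fin.range_fin_succ, Set.range_unique]
  rfl

theorem of_one_pow : (PresentedGroup.of 1 : PresentedGroup (DRels m n)) ^ (2 * n + 1) = 1 := by
  rw [PresentedGroup.of, ← map_pow]
  exact PresentedGroup.one_of_mem (by simp [DRels])

theorem of_zero_mul_of_one_mul_inv :
    (PresentedGroup.of 0 : PresentedGroup (DRels m n)) * PresentedGroup.of 1 *
      (PresentedGroup.of 0)⁻¹ = (PresentedGroup.of 1)⁻¹ := by
  refine eq_inv_of_mul_eq_one_left ?_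
  simp only [PresentedGroup.of, ← map_mul, ← map_inv]
  exact PresentedGroup.one_of_mem (by simp [DRels])

end DRels

theorem D_propertyA : ∀ m n : ℕ, 2 ≤ m → 1 ≤ n →
    HasPropertyA (PresentedGroup (DRels m n)) :=
  fun m n _ _ => hasPropertyA_of_conj_eq_inv (DRels.closure_of_pair_eq_top m n)
    (DRels.of_zero_mul_of_one_mul_inv m n) (DRels.of_one_pow m n)
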